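/- arXiv:nlin/0510022 — 2 statements merged into one kernel-verified Lean document; each statement's English description precedes it below -/
import Mathlib

section
/- Let V, V₁ : ℝ³ → ℝ be smooth functions of (X,Y,T) and define the p-polynomials Q₂(p) = p² + 2Vp and Q₃(p) = p³ + 3Vp² + (3V² + V₁)p. Then the zero-curvature equation ∂_T Q₂ − ∂_Y Q₃ + {Q₂,Q₃} = 0 (with bracket {A,B} = A_p B_X − A_X B_p, and the equation read as an identity of polynomials in p, i.e. coefficientwise) holds if and only if V₁_X = (3/2)V_Y − 3V·V_X and 2V_T = 3V·V_Y + V₁_Y + 2V₁·V_X. -/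
/-- Partial derivatives in `(X, Y, T) : ℝ × ℝ × ℝ`. -/
noncomputable def dX (F : ℝ × ℝ × ℝ → ℝ) (z : ℝ × ℝ × ℝ) : ℝ := fderiv ℝ F z (1, 0, 0)
noncomputable def dY (F : ℝ × ℝ × ℝ → ℝ) (z : ℝ × ℝ × ℝ) : ℝ := fderiv ℝ F z (0, 1, 0)
noncomputable def dT (F : ℝ × ℝ × ℝ → ℝ) (z : ℝ × ℝ × ℝ) : ℝ := fderiv ℝ F z (0, 0, 1)

lemma keyQ2 (V : ℝ × ℝ × ℝ → ℝ) (hV : Differentiable ℝ V) (z v : ℝ × ℝ × ℝ) (p : ℝ) :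
    fderiv ℝ (fun w => p ^ 2 + 2 * V w * p) z v = 2 * p * fderiv ℝ V z v := by
  have H := (((hV z).hasFDerivAt.const_mul 2).mul_const p).const_add (p ^ 2)
  rw [H.fderiv]
  simp
  ring

lemma keyQ3 (V V₁ : ℝ × ℝ × ℝ → ℝ) (hV : Differentiable ℝ V) (hV₁ : Differentiable ℝ V₁)
    (z v : ℝ × ℝ × ℝ) (p : ℝ) :
    fderiv ℝ (fun w => p ^ 3 + 3 * V w * p ^ 2 + (3 * (V w) ^ 2 + V₁ w) * p) z v
      = 3 * p ^ 2 * fderiv ℝ V z v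
        + (6 * V z * fderiv ℝ V z v + fderiv ℝ V₁ z v) * p := by
  have hfun : (fun w => p ^ 3 + 3 * V w * p ^ 2 + (3 * (V w) ^ 2 + V₁ w) * p)
      = fun w => p ^ 3 + 3 * V w * p ^ 2 + (3 * (V w * V w) + V₁ w) * p := by
    funext w; ring
  rw [hfun]
  have H := ((((hV z).hasFDerivAt.const_mul 3).mul_const (p ^ 2)).const_add (p ^ 3)).add
    (((((hV z).hasFDerivAt.mul (hV z).hasFDerivAt).const_mul 3).add
      (hV₁ z).hasFDerivAt).mul_const p)
  rw [(show HasFDerivAt (fun w => p ^ 3 + 3 * V w * p ^ 2 + (3 * (V w * V w) + V₁ w) * p) _ z from H).fderiv]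
  simp
  ring

theorem dmKP_zero_curvature (V V₁ : ℝ × ℝ × ℝ → ℝ)
    (hV : ContDiff ℝ (⊤ : ℕ∞) V) (hV₁ : ContDiff ℝ (⊤ : ℕ∞) V₁)
    (Q₂ Q₃ : ℝ × ℝ × ℝ → ℝ → ℝ)
    (hQ₂ : Q₂ = fun z p => p ^ 2 + 2 * V z * p)
    (hQ₃ : Q₃ = fun z p => p ^ 3 + 3 * V z * p ^ 2 + (3 * (V z) ^ 2 + V₁ z) * p) :
    (∀ (z : ℝ × ℝ × ℝ) (p : ℝ),
        dT (fun w => Q₂ w p) z - dY (fun w => Q₃ w p) z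
          + deriv (Q₂ z) p * dX (fun w => Q₃ w p) z
          - dX (fun w => Q₂ w p) z * deriv (Q₃ z) p = 0)
    ↔ (∀ z : ℝ × ℝ × ℝ,
        dX V₁ z = 3 / 2 * dY V z - 3 * V z * dX V z ∧
        2 * dT V z = 3 * V z * dY V z + dY V₁ z + 2 * V₁ z * dX V z) := by
  have hVd : Differentiable ℝ V := hV.differentiable (by simp)
  have hV₁d : Differentiable ℝ V₁ := hV₁.differentiable (by simp)
  have hd2 : ∀ (z : ℝ × ℝ × ℝ) (p : ℝ), deriv (Q₂ z) p = 2 * p + 2 * V z := by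
    intro z p
    have H : HasDerivAt (Q₂ z) (2 * p + 2 * V z) p := by
      rw [hQ₂]
      have := (hasDerivAt_pow 2 p).add ((hasDerivAt_id p).const_mul (2 * V z))
      simp at this
      exact this
    exact H.deriv
  have hd3 : ∀ (z : ℝ × ℝ × ℝ) (p : ℝ),
      deriv (Q₃ z) p = 3 * p ^ 2 + 6 * V z * p + (3 * (V z) ^ 2 + V₁ z) := by
    intro z p
    have H : HasDerivAt (Q₃ z) (3 * p ^ 2 + 6 * V z * p + (3 * (V z) ^ 2 + V₁ z)) p := by
      rw [hQ₃]
      have := ((hasDerivAt_pow 3 p).add ((hasDerivAt_pow 2 p).const_mul (3 * V z))).add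
        ((hasDerivAt_id p).const_mul (3 * (V z) ^ 2 + V₁ z))
      exact this.congr_deriv (by push_cast; ring)
    exact H.deriv
  have key : ∀ (z : ℝ × ℝ × ℝ) (p : ℝ),
      dT (fun w => Q₂ w p) z - dY (fun w => Q₃ w p) z
        + deriv (Q₂ z) p * dX (fun w => Q₃ w p) z
        - dX (fun w => Q₂ w p) z * deriv (Q₃ z) p
      = (2 * dX V₁ z + 6 * V z * dX V z - 3 * dY V z) * p ^ 2
        + (2 * dT V z - 6 * V z * dY V z - dY V₁ z + 6 * (V z) ^ 2 * dX V z
            + 2 * V z * dX V₁ z - 2 * V₁ z * dX V z) * p := by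
    intro z p
    simp only [hQ₂, hQ₃, dX, dY, dT] at *
    rw [keyQ2 V hVd, keyQ2 V hVd, keyQ3 V V₁ hVd hV₁d, keyQ3 V V₁ hVd hV₁d,
      hd2 z p, hd3 z p]
    ring
  constructor
  · intro h z
    have h1 := h z 1
    have h2 := h z (-1)
    rw [key z 1] at h1
    rw [key z (-1)] at h2
    constructor
    · linear_combination (1 / 4) * h1 + (1 / 4) * h2
    · linear_combination (1 / 2 - V z / 2) * h1 - (1 / 2 + V z / 2) * h2
  · intro h z p
    obtain ⟨h1, h2⟩ := h z
    rw [key z p]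
    linear_combination (2 * p ^ 2 + 2 * V z * p) * h1 + p * h2
end

section
/- Let c ∈ ℝ and let V : U → ℝ be differentiable on an open set U ⊆ ℝ³ of points (X,Y,T) with 3T + 2 ≠ 0, satisfying identically 2(3T + 2)V² + 2YV + Y²/(3T + 2) = cT + X, and suppose 2(3T + 2)V + Y ≠ 0 on U. Define p = −Y/(3T + 2) − V. Then on U: p_Y = (p² + 2Vp)_X. -/
/-!
Write `A = 3T + 2`. Since `p + V = -Y/A`, the flux is `p² + 2Vp = Y²/A² - V²`, so the claim reads
`-1/A - V_Y = -2 V V_X`. Differentiating the relation along the `X`- and `Y`-lines gives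
`W V_X = 1` and `W V_Y + 2V + 2Y/A = 0` with `W = 4AV + 2Y`; multiplying the claim by `W`
(which is nonzero because `W V_X = 1`) turns it into an identity.
-/

open Filter Topology

section Slices

variable {F : ℝ × ℝ × ℝ → ℝ} {z : ℝ × ℝ × ℝ}

theorem hasDerivAt_dX (hF : DifferentiableAt ℝ F z) :
    HasDerivAt (fun x => F (x, z.2.1, z.2.2)) (dX F z) z.1 :=
  hF.hasFDerivAt.comp_hasDerivAt_of_eq z.1
    ((hasDerivAt_id _).prodMk ((hasDerivAt_const _ _).prodMk (hasDerivAt_const _ _))) rfl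

theorem hasDerivAt_dY (hF : DifferentiableAt ℝ F z) :
    HasDerivAt (fun y => F (z.1, y, z.2.2)) (dY F z) z.2.1 :=
  hF.hasFDerivAt.comp_hasDerivAt_of_eq z.2.1
    ((hasDerivAt_const _ _).prodMk ((hasDerivAt_id _).prodMk (hasDerivAt_const _ _))) rfl

theorem eventually_mem_sliceX {U : Set (ℝ × ℝ × ℝ)} (hU : IsOpen U) (hz : z ∈ U) :
    ∀ᶠ x in 𝓝 z.1, (x, z.2.1, z.2.2) ∈ U :=
  (continuous_id.prodMk continuous_const).continuousAt.preimage_mem_nhds (hU.mem_nhds hz)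

theorem eventually_mem_sliceY {U : Set (ℝ × ℝ × ℝ)} (hU : IsOpen U) (hz : z ∈ U) :
    ∀ᶠ y in 𝓝 z.2.1, (z.1, y, z.2.2) ∈ U :=
  (continuous_const.prodMk (continuous_id.prodMk continuous_const)).continuousAt.preimage_mem_nhds
    (hU.mem_nhds hz)

end Slices

section ImplicitDerivative

variable {v : ℝ → ℝ} {v' a k : ℝ}

theorem implicit_deriv_of_quadratic_eq_const_add_id {b x₀ : ℝ} (hv : HasDerivAt v v' x₀)
    (hrel : ∀ᶠ x in 𝓝 x₀, 2 * a * v x ^ 2 + 2 * b * v x + b ^ 2 / a = k + x) :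
    (4 * a * v x₀ + 2 * b) * v' = 1 := by
  have hlhs := (((hv.pow 2).const_mul (2 * a)).add (hv.const_mul (2 * b))).add_const (b ^ 2 / a)
  have hrhs := (hasDerivAt_id x₀).const_add k
  have := hlhs.unique (hrhs.congr_of_eventuallyEq hrel)
  simp only [Nat.cast_ofNat] at this
  linear_combination this

theorem implicit_deriv_of_quadratic_eq_const {y₀ : ℝ} (hv : HasDerivAt v v' y₀)
    (hrel : ∀ᶠ y in 𝓝 y₀, 2 * a * v y ^ 2 + 2 * y * v y + y ^ 2 / a = k) :
    (4 * a * v y₀ + 2 * y₀) * v' + 2 * v y₀ + 2 * y₀ / a = 0 := by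
  have hid := hasDerivAt_id y₀
  have hlhs := (((hv.pow 2).const_mul (2 * a)).add ((hid.const_mul 2).mul hv)).add
    ((hid.pow 2).div_const a)
  have := hlhs.unique ((hasDerivAt_const y₀ k).congr_of_eventuallyEq hrel)
  simp only [Nat.cast_ofNat, id] at this
  linear_combination this

end ImplicitDerivative

theorem m2_source_equation_p_general (c : ℝ) (U : Set (ℝ × ℝ × ℝ)) (hU : IsOpen U)
    (V : ℝ × ℝ × ℝ → ℝ) (hV : ∀ z ∈ U, DifferentiableAt ℝ V z)
    (hT : ∀ z ∈ U, 3 * z.2.2 + 2 ≠ 0)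
    (hrel : ∀ z ∈ U,
      2 * (3 * z.2.2 + 2) * (V z) ^ 2 + 2 * z.2.1 * V z
        + z.2.1 ^ 2 / (3 * z.2.2 + 2) = c * z.2.2 + z.1)
    (p : ℝ × ℝ × ℝ → ℝ)
    (hp : p = fun z => -z.2.1 / (3 * z.2.2 + 2) - V z) :
    ∀ z ∈ U, dY p z = dX (fun w => (p w) ^ 2 + 2 * V w * p w) z := by
  intro z hz
  have hA : 3 * z.2.2 + 2 ≠ 0 := hT z hz
  have hVz := hV z hz
  have hVX := implicit_deriv_of_quadratic_eq_const_add_id (a := 3 * z.2.2 + 2) (b := z.2.1)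
    (k := c * z.2.2) (hasDerivAt_dX hVz)
    ((eventually_mem_sliceX hU hz).mono fun x hx => hrel _ hx)
  have hVY := implicit_deriv_of_quadratic_eq_const (a := 3 * z.2.2 + 2)
    (k := c * z.2.2 + z.1) (hasDerivAt_dY hVz)
    ((eventually_mem_sliceY hU hz).mono fun y hy => hrel _ hy)
  have hpz : DifferentiableAt ℝ p z := by
    rw [hp]
    fun_prop (disch := exact hA)
  have hpX : HasDerivAt (fun x => p (x, z.2.1, z.2.2)) (-dX V z) z.1 := by
    rw [hp]
    exact (hasDerivAt_dX hVz).const_sub (-z.2.1 / (3 * z.2.2 + 2))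
  have hpY : HasDerivAt (fun y => p (z.1, y, z.2.2)) (-1 / (3 * z.2.2 + 2) - dY V z) z.2.1 := by
    rw [hp]
    exact ((hasDerivAt_id z.2.1).neg.div_const (3 * z.2.2 + 2)).sub (hasDerivAt_dY hVz)
  have hflux : DifferentiableAt ℝ (fun w => p w ^ 2 + 2 * V w * p w) z := by fun_prop
  rw [(hasDerivAt_dY hpz).unique hpY,
    (hasDerivAt_dX hflux).unique ((hpX.pow 2).add (((hasDerivAt_dX hVz).const_mul 2).mul hpX))]
  simp only [Prod.mk.eta] at hVX hVY ⊢
  have hW : 4 * (3 * z.2.2 + 2) * V z + 2 * z.2.1 ≠ 0 := left_ne_zero_of_mul_eq_one hVX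
  apply mul_left_cancel₀ hW
  linear_combination -hVY + 2 * V z * hVX - 4 * V z * mul_inv_cancel₀ hA

/-- Points are `z = (X, Y, T)`, so `z.1 = X`, `z.2.1 = Y`, `z.2.2 = T`. -/
theorem m2_source_equation_p (c : ℝ) (U : Set (ℝ × ℝ × ℝ)) (hU : IsOpen U)
    (V : ℝ × ℝ × ℝ → ℝ) (hV : ∀ z ∈ U, DifferentiableAt ℝ V z)
    (hT : ∀ z ∈ U, 3 * z.2.2 + 2 ≠ 0)
    (hrel : ∀ z ∈ U,
      2 * (3 * z.2.2 + 2) * (V z) ^ 2 + 2 * z.2.1 * V z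
        + z.2.1 ^ 2 / (3 * z.2.2 + 2) = c * z.2.2 + z.1)
    (hnd : ∀ z ∈ U, 2 * (3 * z.2.2 + 2) * V z + z.2.1 ≠ 0)
    (p : ℝ × ℝ × ℝ → ℝ)
    (hp : p = fun z => -z.2.1 / (3 * z.2.2 + 2) - V z) :
    ∀ z ∈ U, dY p z = dX (fun w => (p w) ^ 2 + 2 * V w * p w) z :=
  m2_source_equation_p_general c U hU V hV hT hrel p hp
end
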